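/- Let (H, R) be a quasitriangular Hopf algebra and set W = R²¹R. Then the element (S ⊗ id)(W) ∈ H ⊗ H is invariant under the diagonal adjoint action: for all a ∈ H, Σ a₁ S(W₁) S(a₂) ⊗ a₃ W₂ S(a₄) = ε(a) (S ⊗ id)(W), where W = Σ W₁ ⊗ W₂. -/

import Mathlib

open TensorProduct

variable (k H : Type*) [Field k] [Ring H] [HopfAlgebra k H]

/-- Embedding `H ⊗ H → H ⊗ H ⊗ H` on legs 1 and 2. -/
noncomputable def leg12 : H ⊗[k] H →ₐ[k] H ⊗[k] (H ⊗[k] H) :=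
  Algebra.TensorProduct.map (AlgHom.id k H) Algebra.TensorProduct.includeLeft

/-- Embedding `H ⊗ H → H ⊗ H ⊗ H` on legs 1 and 3. -/
noncomputable def leg13 : H ⊗[k] H →ₐ[k] H ⊗[k] (H ⊗[k] H) :=
  Algebra.TensorProduct.map (AlgHom.id k H) Algebra.TensorProduct.includeRight

/-- Embedding `H ⊗ H → H ⊗ H ⊗ H` on legs 2 and 3. -/
noncomputable def leg23 : H ⊗[k] H →ₐ[k] H ⊗[k] (H ⊗[k] H) :=
  Algebra.TensorProduct.includeRight


/-- The map `a ↦ Σ (a₁ ⊗ a₃) ⊗ (a₂ ⊗ a₄)` built from the iterated coproduct. -/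
noncomputable def comulFour : H →ₗ[k] (H ⊗[k] H) ⊗[k] (H ⊗[k] H) :=
  (TensorProduct.tensorTensorTensorComm k H H H H).toLinearMap ∘ₗ
    (TensorProduct.map (Coalgebra.comul (R := k)) (Coalgebra.comul (R := k))) ∘ₗ
      (Coalgebra.comul (R := k))

/-- The diagonal adjoint action of `a` on `X ∈ H ⊗ H`:
`(P ⊗ Q) ↦ P * X * (S ⊗ S)(Q)`, precomposed with `comulFour` this gives
`a · X = Σ (a₁ X₁ S(a₂)) ⊗ (a₃ X₂ S(a₄))`. -/
noncomputable def adAct (X : H ⊗[k] H) : (H ⊗[k] H) ⊗[k] (H ⊗[k] H) →ₗ[k] H ⊗[k] H :=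
  (LinearMap.mul' k (H ⊗[k] H)) ∘ₗ
    (TensorProduct.map (LinearMap.mulRight k X)
      (TensorProduct.map (HopfAlgebra.antipode (R := k)) (HopfAlgebra.antipode (R := k))))

/-!
Because `R` intertwines `Δ` and `Δᵒᵖ`, the element `W = R²¹R` commutes with every `Δ(h)`.
By coassociativity the middle legs `a₂ ⊗ a₃` of the fourfold coproduct are `Δ` of a single
factor. Since `S` is antimultiplicative, `a₁ S(W₁) S(a₂) ⊗ a₃ W₂ S(a₄) = a₁ S(a₂ W₁) ⊗ a₃ W₂ S(a₄)`
only sees `(a₂ ⊗ a₃) W`. Replacing it by `W (a₂ ⊗ a₃)` gives `a₁ S(a₂) S(W₁) ⊗ W₂ a₃ S(a₄)`,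
and the antipode axiom collapses the outer factors to `ε(a)`.
-/

open Coalgebra HopfAlgebra LinearMap

section Coalgebra

variable {R C : Type*} [CommSemiring R] [AddCommMonoid C] [Module R C] [Coalgebra R C]

noncomputable def comulMiddle : C →ₗ[R] (C ⊗[R] (C ⊗[R] C)) ⊗[R] C :=
  rTensor C (lTensor C comul) ∘ₗ rTensor C comul ∘ₗ comul

lemma tensorTensorTensorAssoc_comp_map_comul_comp_comul :
    (tensorTensorTensorAssoc R C C C C).toLinearMap ∘ₗ map (comul (R := R)) comul ∘ₗ comul
      = comulMiddle := by
  simp only [comulMiddle, tensorTensorTensorAssoc, LinearEquiv.coe_toLinearMap_one, coassoc_simps]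

lemma rTensor_lTensor_comp_comulMiddle_congr {M : Type*} [AddCommMonoid M] [Module R M]
    {f g : C ⊗[R] C →ₗ[R] M} (h : f ∘ₗ comul = g ∘ₗ comul) :
    rTensor C (lTensor C f) ∘ₗ comulMiddle = rTensor C (lTensor C g) ∘ₗ comulMiddle (R := R) := by
  simp only [comulMiddle, ← comp_assoc, ← rTensor_comp, ← lTensor_comp, h]

end Coalgebra

section HopfAlgebra

variable {R A : Type*} [CommSemiring R] [Semiring A] [HopfAlgebra R A]

noncomputable def antipodeContraction : (A ⊗[R] (A ⊗[R] A)) ⊗[R] A →ₗ[R] A ⊗[R] A :=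
  map (mul' R A ∘ₗ lTensor A (antipode R)) (mul' R A ∘ₗ lTensor A (antipode R)) ∘ₗ
    (tensorTensorTensorAssoc R A A A A).symm.toLinearMap

@[simp] lemma antipodeContraction_tmul (l p q n : A) :
    antipodeContraction ((l ⊗ₜ[R] (p ⊗ₜ[R] q)) ⊗ₜ[R] n)
      = (l * antipode R p) ⊗ₜ[R] (q * antipode R n) := by
  simp [antipodeContraction]

lemma antipodeContraction_comulMiddle (a : A) :
    antipodeContraction (comulMiddle (R := R) a) = counit (R := R) a • 1 := by
  rw [← tensorTensorTensorAssoc_comp_map_comul_comp_comul]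
  simp only [antipodeContraction, LinearMap.comp_apply, LinearEquiv.coe_coe,
    LinearEquiv.symm_apply_apply, ← LinearMap.comp_apply (map _ _) (map _ _), ← map_comp,
    comp_assoc, mul_antipode_lTensor_comul]
  rw [map_comp, comp_apply, ← comp_apply (map counit counit),
    CoassocSimps.map_counit_comp_comul_left]
  simp [Algebra.TensorProduct.one_def, Algebra.algebraMap_eq_smul_one]

noncomputable def sandwich (V : A ⊗[R] A) : A ⊗[R] A →ₗ[R] A ⊗[R] A :=
  mul' R (A ⊗[R] A) ∘ₗ
    map (mulRight R V ∘ₗ Algebra.TensorProduct.includeLeft.toLinearMap)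
      Algebra.TensorProduct.includeRight.toLinearMap

@[simp] lemma sandwich_tmul (V : A ⊗[R] A) (u v : A) :
    sandwich V (u ⊗ₜ[R] v) = (u ⊗ₜ[R] 1) * V * (1 ⊗ₜ[R] v) := by
  simp [sandwich]

lemma sandwich_one (V : A ⊗[R] A) : sandwich V 1 = V := by
  rw [Algebra.TensorProduct.one_def, sandwich_tmul, ← Algebra.TensorProduct.one_def, one_mul,
    mul_one]

lemma antipodeContraction_comp_rTensor_lTensor_mulLeft (X : A ⊗[R] A) :
    antipodeContraction ∘ₗ rTensor A (lTensor A (mulLeft R X))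
      = sandwich (map (antipode R) id X) ∘ₗ antipodeContraction := by
  ext l p q n
  induction X using TensorProduct.induction_on with
  | zero => simp
  | tmul x y => simp [Algebra.TensorProduct.tmul_mul_tmul, antipode_mul_antidistrib, mul_assoc]
  | add x y hx hy => simp_all [add_mul, mul_add, tmul_add, add_tmul]

lemma commute_comm_mul_self {x r : A ⊗[R] A} (h : TensorProduct.comm R A A x * r = r * x) :
    Commute x (TensorProduct.comm R A A r * r) := by
  have hflip : x * TensorProduct.comm R A A r
      = TensorProduct.comm R A A r * TensorProduct.comm R A A x := by
    have hcoe : ∀ y, Algebra.TensorProduct.comm R A A y = TensorProduct.comm R A A y :=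
      fun _ => rfl
    have := congr(Algebra.TensorProduct.comm R A A $h)
    rwa [map_mul, map_mul, hcoe, hcoe, hcoe, comm_comm] at this
  rw [Commute, SemiconjBy, ← mul_assoc, hflip, mul_assoc, h, mul_assoc]

end HopfAlgebra

section AdjointAction

variable {k H}

lemma comulFour_eq_comp_comulMiddle :
    comulFour k H = (tensorTensorTensorComm k H H H H).toLinearMap ∘ₗ
      (tensorTensorTensorAssoc k H H H H).symm.toLinearMap ∘ₗ comulMiddle := by
  rw [← tensorTensorTensorAssoc_comp_map_comul_comp_comul, comulFour, LinearEquiv.symm_comp_assoc]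

lemma adAct_map_antipode_id_comp (X : H ⊗[k] H) :
    adAct k H (map (antipode k) id X) ∘ₗ (tensorTensorTensorComm k H H H H).toLinearMap ∘ₗ
        (tensorTensorTensorAssoc k H H H H).symm.toLinearMap
      = antipodeContraction ∘ₗ rTensor H (lTensor H (mulRight k X)) := by
  ext l p q n
  induction X using TensorProduct.induction_on with
  | zero => simp [adAct]
  | tmul x y =>
    simp [adAct, Algebra.TensorProduct.tmul_mul_tmul, antipode_mul_antidistrib, mul_assoc]
  | add x y hx hy => simp_all [adAct, mul_add, tmul_add, add_tmul]

end AdjointAction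

theorem ad_invariance_of_SW (R : H ⊗[k] H)
    (h3 : ∀ h : H,
      (TensorProduct.comm k H H) (Coalgebra.comul (R := k) h) * R
        = R * Coalgebra.comul (R := k) h)
    :
    ∀ a : H,
      adAct k H ((TensorProduct.map (HopfAlgebra.antipode (R := k)) LinearMap.id)
          ((TensorProduct.comm k H H) R * R)) (comulFour k H a)
        = Coalgebra.counit (R := k) a •
            ((TensorProduct.map (HopfAlgebra.antipode (R := k)) LinearMap.id)
              ((TensorProduct.comm k H H) R * R)) := by
  intro a
  set W := TensorProduct.comm k H H R * R
  have hW : mulRight k W ∘ₗ comul = mulLeft k W ∘ₗ comul :=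
    LinearMap.ext fun h => (commute_comm_mul_self (h3 h)).eq
  calc adAct k H (map (antipode k) id W) (comulFour k H a)
      = antipodeContraction (rTensor H (lTensor H (mulRight k W)) (comulMiddle a)) := by
        rw [comulFour_eq_comp_comulMiddle]
        exact LinearMap.congr_fun (adAct_map_antipode_id_comp W) (comulMiddle a)
    _ = antipodeContraction (rTensor H (lTensor H (mulLeft k W)) (comulMiddle a)) := by
        rw [← comp_apply (rTensor H _), rTensor_lTensor_comp_comulMiddle_congr hW, comp_apply]
    _ = sandwich (map (antipode k) id W) (antipodeContraction (comulMiddle a)) :=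
        LinearMap.congr_fun (antipodeContraction_comp_rTensor_lTensor_mulLeft W) _
    _ = counit a • map (antipode k) id W := by
        rw [antipodeContraction_comulMiddle, map_smul, sandwich_one]
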